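/- For (t,x) and (t̃,x̃) in ℕ × ∂B with t, t̃ ≥ 1 and (t̃,x̃) ∈ S(t,x), the inverse matrices agree on functions supported on S(t̃,x̃): for any vector v indexed by S(t,x) that vanishes outside S(t̃,x̃), the restriction of (W^±_{t,x})^{−1} v to S(t̃,x̃) equals (W^±_{t̃,x̃})^{−1} applied to the restriction of v to S(t̃,x̃). -/

import Mathlib

open Finset

/-- The `i`-th standard unit vector `e_i` in `ℤ^(d+1)`. -/
def unitVec (d : ℕ) (i : Fin (d + 1)) : Fin (d + 1) → ℤ := Pi.single i 1

/-- The ℓ¹-norm `‖v‖₁ = ∑ i, |v i|` on `ℤ^(d+1)`. -/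
def norm1 {d : ℕ} (v : Fin (d + 1) → ℤ) : ℤ := ∑ i, |v i|

/-- `P t x z` represents the `t`-step transition probability `P(Z^x_t = z)` of a
time-homogeneous Markov chain on `ℤ^(d+1)` which at each step moves by `± e_i`,
with all `2(d+1)` one-step probabilities strictly positive and summing to `1`. -/
structure IsRandomWalk (d : ℕ)
    (P : ℕ → (Fin (d + 1) → ℤ) → (Fin (d + 1) → ℤ) → ℝ) : Prop where
  nonneg : ∀ t x z, 0 ≤ P t x z
  init : ∀ x z, P 0 x z = if z = x then 1 else 0
  step : ∀ t x z, P (t + 1) x z =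
      ∑ i, P 1 x (x + unitVec d i) * P t (x + unitVec d i) z
        + ∑ i, P 1 x (x - unitVec d i) * P t (x - unitVec d i) z
  sum_one : ∀ x, (∑ i, P 1 x (x + unitVec d i)) + (∑ i, P 1 x (x - unitVec d i)) = 1
  pos_add : ∀ x i, 0 < P 1 x (x + unitVec d i)
  pos_sub : ∀ x i, 0 < P 1 x (x - unitVec d i)

/-- The expectation `E[h(Z^x_t)]` (the law of `Z^x_t` has finite support). -/
noncomputable def expect {d : ℕ} (P : ℕ → (Fin (d + 1) → ℤ) → (Fin (d + 1) → ℤ) → ℝ)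
    (t : ℕ) (x : Fin (d + 1) → ℤ) (h : (Fin (d + 1) → ℤ) → ℝ) : ℝ :=
  ∑ᶠ z, h z * P t x z

/-- The finite set `S(t,x) = {(s,y) ∈ ℕ × ∂B : 1 ≤ s ≤ t, ‖y − x‖₁ ≤ t − s,
and t − s − ‖y − x‖₁ is even}`. -/
noncomputable def Sset (d t : ℕ) (x : Fin (d + 1) → ℤ) : Finset (ℕ × (Fin (d + 1) → ℤ)) :=
  ((Finset.Icc 1 t) ×ˢ (Fintype.piFinset fun i => Finset.Icc (x i - t) (x i + t))).filter
    (fun p => p.2 (Fin.last d) = 0 ∧ norm1 (p.2 - x) ≤ (t : ℤ) - p.1 ∧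
      Even ((t : ℤ) - p.1 - norm1 (p.2 - x)))

/-- The matrix `W^+_{t,x}`, with entries `(W^+)_{(s,y),(u,z)} = P(Z^y_s = z + u e_d)`. -/
noncomputable def Wplus {d : ℕ} (P : ℕ → (Fin (d + 1) → ℤ) → (Fin (d + 1) → ℤ) → ℝ)
    (t : ℕ) (x : Fin (d + 1) → ℤ) :
    Matrix {p // p ∈ Sset d t x} {p // p ∈ Sset d t x} ℝ :=
  fun p q => P p.1.1 p.1.2 (q.1.2 + Pi.single (Fin.last d) (q.1.1 : ℤ))

/-- The matrix `W^-_{t,x}`, with entries `(W^-)_{(s,y),(u,z)} = P(Z^y_s = z - u e_d)`. -/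
noncomputable def Wminus {d : ℕ} (P : ℕ → (Fin (d + 1) → ℤ) → (Fin (d + 1) → ℤ) → ℝ)
    (t : ℕ) (x : Fin (d + 1) → ℤ) :
    Matrix {p // p ∈ Sset d t x} {p // p ∈ Sset d t x} ℝ :=
  fun p q => P p.1.1 p.1.2 (q.1.2 - Pi.single (Fin.last d) (q.1.1 : ℤ))

/-- `N_{t,x} = (W^-_{t,x})⁻¹ W^+_{t,x}`. -/
noncomputable def Nmat {d : ℕ} (P : ℕ → (Fin (d + 1) → ℤ) → (Fin (d + 1) → ℤ) → ℝ)
    (t : ℕ) (x : Fin (d + 1) → ℤ) :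
    Matrix {p // p ∈ Sset d t x} {p // p ∈ Sset d t x} ℝ :=
  (Wminus P t x)⁻¹ * Wplus P t x

/-- The extended transform `N f`, vanishing outside `{w : w_d < 0}`, defined at a point
`w = x − t e_d` (with `x ∈ ∂B`, `t ≥ 1`) as the `(t,x)`-component of `N_{t,x}` applied to
the vector `(f(z + u e_d))_{(u,z) ∈ S(t,x)}`.  (Note that `(t,x) ∈ S(t,x)` always holds
in this situation, so the guard below is satisfied exactly when `w_d < 0`.) -/
noncomputable def Ntrans {d : ℕ} (P : ℕ → (Fin (d + 1) → ℤ) → (Fin (d + 1) → ℤ) → ℝ)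
    (f : (Fin (d + 1) → ℤ) → ℝ) : (Fin (d + 1) → ℤ) → ℝ := fun w =>
  if hm : ((-(w (Fin.last d))).toNat, Function.update w (Fin.last d) 0) ∈
      Sset d (-(w (Fin.last d))).toNat (Function.update w (Fin.last d) 0) then
    (Nmat P (-(w (Fin.last d))).toNat (Function.update w (Fin.last d) 0)).mulVec
      (fun p => f (p.1.2 + Pi.single (Fin.last d) (p.1.1 : ℤ)))
      ⟨((-(w (Fin.last d))).toNat, Function.update w (Fin.last d) 0), hm⟩
  else 0


lemma norm1_nonneg {d : ℕ} (v : Fin (d + 1) → ℤ) : 0 ≤ norm1 v :=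
  Finset.sum_nonneg fun _ _ => abs_nonneg _

lemma norm1_eq_zero {d : ℕ} {v : Fin (d + 1) → ℤ} (h : norm1 v = 0) : v = 0 := by
  funext i
  have := (Finset.sum_eq_zero_iff_of_nonneg (fun i _ => abs_nonneg (v i))).mp h i (mem_univ i)
  simpa [abs_eq_zero] using this

lemma norm1_add_le {d : ℕ} (u v : Fin (d + 1) → ℤ) : norm1 (u + v) ≤ norm1 u + norm1 v := by
  rw [norm1, norm1, norm1, ← Finset.sum_add_distrib]
  exact Finset.sum_le_sum fun i _ => abs_add_le _ _

def sum1 {d : ℕ} (v : Fin (d + 1) → ℤ) : ℤ := ∑ i, v i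

lemma sum1_add {d : ℕ} (u v : Fin (d + 1) → ℤ) : sum1 (u + v) = sum1 u + sum1 v := by
  rw [sum1, sum1, sum1, ← Finset.sum_add_distrib]; rfl

lemma even_norm1_sub_sum1 {d : ℕ} (v : Fin (d + 1) → ℤ) : Even (norm1 v - sum1 v) := by
  rw [norm1, sum1, ← Finset.sum_sub_distrib]
  apply Finset.even_sum
  intro i _
  rcases abs_choice (v i) with h | h <;> rw [h]
  · simp
  · rw [show -v i - v i = -(2 * v i) by ring]
    exact (even_two_mul (v i)).neg

lemma norm1_mod2 {d : ℕ} (v : Fin (d + 1) → ℤ) : norm1 v % 2 = sum1 v % 2 := by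
  have := even_norm1_sub_sum1 v
  rw [Int.even_iff] at this
  omega

lemma abs_le_norm1 {d : ℕ} (v : Fin (d + 1) → ℤ) (i : Fin (d + 1)) : |v i| ≤ norm1 v :=
  Finset.single_le_sum (fun j _ => abs_nonneg (v j)) (mem_univ i)

lemma norm1_unitVec {d : ℕ} (i : Fin (d + 1)) : norm1 (unitVec d i) = 1 := by
  rw [norm1, Finset.sum_eq_single i]
  · simp [unitVec]
  · intro j _ hj; simp [unitVec, Pi.single_apply, hj]
  · simp

lemma norm1_neg {d : ℕ} (v : Fin (d + 1) → ℤ) : norm1 (-v) = norm1 v := by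
  rw [norm1, norm1]; exact Finset.sum_congr rfl fun i _ => abs_neg _

lemma sum1_neg {d : ℕ} (v : Fin (d + 1) → ℤ) : sum1 (-v) = -sum1 v := by
  rw [sum1, sum1, ← Finset.sum_neg_distrib]; rfl

lemma sum1_unitVec {d : ℕ} (i : Fin (d + 1)) : sum1 (unitVec d i) = 1 := by
  simp [sum1, unitVec]

lemma norm1_single_last {d : ℕ} (v : Fin (d + 1) → ℤ) (c : ℤ) (hv : v (Fin.last d) = 0) :
    norm1 (v + Pi.single (Fin.last d) c) = norm1 v + |c| := by
  rw [norm1, norm1, Fin.sum_univ_castSucc, Fin.sum_univ_castSucc]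
  have h1 : ∀ j : Fin d, (v + Pi.single (Fin.last d) c : Fin (d+1) → ℤ) j.castSucc = v j.castSucc := by
    intro j
    have hne : (j.castSucc : Fin (d+1)) ≠ Fin.last d := (Fin.castSucc_lt_last j).ne
    simp [Pi.single_apply, hne]
  have h2 : (v + Pi.single (Fin.last d) c : Fin (d+1) → ℤ) (Fin.last d) = c := by
    simp [hv]
  rw [h2, hv]
  simp only [h1]
  simp

lemma mem_Sset_iff {d t : ℕ} {x : Fin (d + 1) → ℤ} {p : ℕ × (Fin (d + 1) → ℤ)} :
    p ∈ Sset d t x ↔ 1 ≤ p.1 ∧ p.2 (Fin.last d) = 0 ∧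
      norm1 (p.2 - x) ≤ (t : ℤ) - p.1 ∧ Even ((t : ℤ) - p.1 - norm1 (p.2 - x)) := by
  constructor
  · intro h
    rw [Sset, Finset.mem_filter, Finset.mem_product, Finset.mem_Icc] at h
    exact ⟨h.1.1.1, h.2⟩
  · rintro ⟨h1, h2, h3, h4⟩
    have hn := norm1_nonneg (p.2 - x)
    have hpt : (p.1 : ℤ) ≤ t := by omega
    rw [Sset, Finset.mem_filter, Finset.mem_product, Finset.mem_Icc]
    refine ⟨⟨⟨h1, by exact_mod_cast hpt⟩, ?_⟩, h2, h3, h4⟩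
    rw [Fintype.mem_piFinset]
    intro i
    have := abs_le_norm1 (p.2 - x) i
    have : |p.2 i - x i| ≤ (t : ℤ) := by
      have h5 : (p.1 : ℤ) ≥ 1 := by exact_mod_cast h1
      calc |p.2 i - x i| = |(p.2 - x) i| := rfl
        _ ≤ norm1 (p.2 - x) := abs_le_norm1 _ i
        _ ≤ (t : ℤ) - p.1 := h3
        _ ≤ t := by omega
    rw [Finset.mem_Icc]
    rcases abs_le.mp this with ⟨ha, hb⟩
    constructor <;> omega

/-- transitivity: `(s,y) ∈ S(t,x)` and `(u,z) ∈ S(s,y)` imply `(u,z) ∈ S(t,x)`. -/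
lemma Sset_subset {d t s : ℕ} {x y : Fin (d + 1) → ℤ}
    (h : (s, y) ∈ Sset d t x) : Sset d s y ⊆ Sset d t x := by
  intro p hp
  rw [mem_Sset_iff] at h hp ⊢
  dsimp only at h
  obtain ⟨h1, h2, h3, h4⟩ := h
  obtain ⟨g1, g2, g3, g4⟩ := hp
  refine ⟨g1, g2, ?_, ?_⟩
  · calc norm1 (p.2 - x) = norm1 ((p.2 - y) + (y - x)) := by ring_nf
      _ ≤ norm1 (p.2 - y) + norm1 (y - x) := norm1_add_le _ _
      _ ≤ ((s : ℤ) - p.1) + ((t : ℤ) - s) := add_le_add g3 h3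
      _ = (t : ℤ) - p.1 := by ring
  · have key : (norm1 (p.2 - x) - (norm1 (p.2 - y) + norm1 (y - x))) % 2 = 0 := by
      have e1 := norm1_mod2 (p.2 - x)
      have e2 := norm1_mod2 (p.2 - y)
      have e3 := norm1_mod2 (y - x)
      have e4 : sum1 (p.2 - x) = sum1 (p.2 - y) + sum1 (y - x) := by
        rw [← sum1_add]; ring_nf
      omega
    rw [Int.even_iff] at h4 g4 ⊢
    omega

variable {d : ℕ} {P : ℕ → (Fin (d + 1) → ℤ) → (Fin (d + 1) → ℤ) → ℝ}

/-- support of `P t x ·`: within ℓ¹-ball of radius `t`, with matching parity. -/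
lemma P_support (hP : IsRandomWalk d P) :
    ∀ (t : ℕ) (x z : Fin (d + 1) → ℤ), P t x z ≠ 0 →
      norm1 (z - x) ≤ (t : ℤ) ∧ Even ((t : ℤ) - norm1 (z - x)) := by
  intro t
  induction t with
  | zero =>
    intro x z h
    rw [hP.init] at h
    have : z = x := by by_contra hc; simp [hc] at h
    subst this
    simp [show z - z = 0 by ring, norm1]
  | succ t ih =>
    intro x z h
    rw [hP.step] at h
    have hterm : (∃ i, P t (x + unitVec d i) z ≠ 0) ∨ ∃ i, P t (x - unitVec d i) z ≠ 0 := by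
      by_contra hc
      push_neg at hc
      obtain ⟨hc1, hc2⟩ := hc
      apply h
      rw [Finset.sum_eq_zero (fun i _ => by rw [hc1 i, mul_zero]),
        Finset.sum_eq_zero (fun i _ => by rw [hc2 i, mul_zero]), add_zero]
    have key : ∀ (y : Fin (d+1) → ℤ), (norm1 (y - x) = 1 ∧ sum1 (y - x) % 2 = 1) →
        P t y z ≠ 0 → norm1 (z - x) ≤ ((t:ℤ) + 1) ∧ Even (((t:ℤ) + 1) - norm1 (z - x)) := by
      rintro y ⟨hn, hs⟩ hne
      obtain ⟨h1, h2⟩ := ih y z hne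
      constructor
      · calc norm1 (z - x) = norm1 ((z - y) + (y - x)) := by ring_nf
          _ ≤ norm1 (z - y) + norm1 (y - x) := norm1_add_le _ _
          _ ≤ (t : ℤ) + 1 := by omega
      · have e1 := norm1_mod2 (z - x)
        have e2 := norm1_mod2 (z - y)
        have e3 := norm1_mod2 (y - x)
        have e4 : sum1 (z - x) = sum1 (z - y) + sum1 (y - x) := by
          rw [← sum1_add]; ring_nf
        rw [Int.even_iff] at h2 ⊢
        have hb : norm1 (z - x) ≤ (t:ℤ) + 1 := by
          calc norm1 (z - x) = norm1 ((z - y) + (y - x)) := by ring_nf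
            _ ≤ norm1 (z - y) + norm1 (y - x) := norm1_add_le _ _
            _ ≤ (t : ℤ) + 1 := by omega
        omega
    rcases hterm with ⟨i, hi⟩ | ⟨i, hi⟩
    · refine key (x + unitVec d i) ⟨?_, ?_⟩ hi <;>
        · rw [show x + unitVec d i - x = unitVec d i by ring]
          first
            | exact norm1_unitVec i
            | (rw [sum1_unitVec]; decide)
    · refine key (x - unitVec d i) ⟨?_, ?_⟩ hi <;>
        rw [show x - unitVec d i - x = -unitVec d i by ring]
      · rw [norm1_neg]; exact norm1_unitVec i
      · rw [sum1_neg, sum1_unitVec]; decide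

lemma P_pos_add (hP : IsRandomWalk d P) :
    ∀ (s : ℕ) (y : Fin (d + 1) → ℤ), 0 < P s y (y + Pi.single (Fin.last d) (s : ℤ)) := by
  intro s
  induction s with
  | zero => intro y; simp [hP.init]
  | succ s ih =>
    intro y
    set z := y + Pi.single (Fin.last d) ((s : ℤ) + 1) with hz
    have hzz : y + Pi.single (Fin.last d) (((s : ℕ) + 1 : ℕ) : ℤ) = z := by
      rw [hz]; push_cast; ring_nf
    rw [hzz, hP.step]
    have hz2 : z = (y + unitVec d (Fin.last d)) + Pi.single (Fin.last d) (s : ℤ) := by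
      rw [hz, unitVec, add_assoc, ← Pi.single_add, add_comm (1:ℤ) (s:ℤ)]
    have hpos : 0 < P 1 y (y + unitVec d (Fin.last d)) * P s (y + unitVec d (Fin.last d)) z := by
      apply mul_pos (hP.pos_add y (Fin.last d))
      rw [hz2]; exact ih _
    have h1 : P 1 y (y + unitVec d (Fin.last d)) * P s (y + unitVec d (Fin.last d)) z ≤
        ∑ i, P 1 y (y + unitVec d i) * P s (y + unitVec d i) z :=
      Finset.single_le_sum (f := fun i => P 1 y (y + unitVec d i) * P s (y + unitVec d i) z)
        (fun i _ => mul_nonneg (hP.nonneg _ _ _) (hP.nonneg _ _ _))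
        (Finset.mem_univ (Fin.last d))
    have h2 : 0 ≤ ∑ i, P 1 y (y - unitVec d i) * P s (y - unitVec d i) z :=
      Finset.sum_nonneg fun i _ => mul_nonneg (hP.nonneg _ _ _) (hP.nonneg _ _ _)
    linarith

lemma P_pos_sub (hP : IsRandomWalk d P) :
    ∀ (s : ℕ) (y : Fin (d + 1) → ℤ), 0 < P s y (y + Pi.single (Fin.last d) (-(s : ℤ))) := by
  intro s
  induction s with
  | zero => intro y; simp [hP.init]
  | succ s ih =>
    intro y
    set z := y + Pi.single (Fin.last d) (-((s : ℤ) + 1)) with hz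
    have hzz : y + Pi.single (Fin.last d) (-(((s : ℕ) + 1 : ℕ) : ℤ)) = z := by
      rw [hz]; push_cast; ring_nf
    rw [hzz, hP.step]
    have hz2 : z = (y - unitVec d (Fin.last d)) + Pi.single (Fin.last d) (-(s : ℤ)) := by
      rw [hz, unitVec, show (-((s:ℤ)+1)) = (-1) + (-(s:ℤ)) by ring, Pi.single_add]
      have : (Pi.single (Fin.last d) (-1 : ℤ) : Fin (d+1) → ℤ) = -Pi.single (Fin.last d) 1 := by
        rw [← Pi.single_neg]
      rw [this]
      abel
    have hpos : 0 < P 1 y (y - unitVec d (Fin.last d)) * P s (y - unitVec d (Fin.last d)) z := by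
      apply mul_pos (hP.pos_sub y (Fin.last d))
      rw [hz2]; exact ih _
    have h1 : P 1 y (y - unitVec d (Fin.last d)) * P s (y - unitVec d (Fin.last d)) z ≤
        ∑ i, P 1 y (y - unitVec d i) * P s (y - unitVec d i) z :=
      Finset.single_le_sum (f := fun i => P 1 y (y - unitVec d i) * P s (y - unitVec d i) z)
        (fun i _ => mul_nonneg (hP.nonneg _ _ _) (hP.nonneg _ _ _))
        (Finset.mem_univ (Fin.last d))
    have h2 : 0 ≤ ∑ i, P 1 y (y + unitVec d i) * P s (y + unitVec d i) z :=
      Finset.sum_nonneg fun i _ => mul_nonneg (hP.nonneg _ _ _) (hP.nonneg _ _ _)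
    linarith

noncomputable def Wgen (d : ℕ) (P : ℕ → (Fin (d + 1) → ℤ) → (Fin (d + 1) → ℤ) → ℝ)
    (ε : ℤ) (t : ℕ) (x : Fin (d + 1) → ℤ) :
    Matrix {p // p ∈ Sset d t x} {p // p ∈ Sset d t x} ℝ :=
  fun p q => P p.1.1 p.1.2 (q.1.2 + Pi.single (Fin.last d) (ε * q.1.1))

variable {ε : ℤ} {t t' : ℕ} {x x' : Fin (d + 1) → ℤ}

lemma Wgen_support (hP : IsRandomWalk d P) (hε : ε = 1 ∨ ε = -1)
    (p q : {p // p ∈ Sset d t x}) (h : Wgen d P ε t x p q ≠ 0) :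
    q.1 ∈ Sset d p.1.1 p.1.2 := by
  obtain ⟨-, hy, -, -⟩ := mem_Sset_iff.mp p.2
  obtain ⟨hu, hz, -, -⟩ := mem_Sset_iff.mp q.2
  obtain ⟨hn, hpar⟩ := P_support hP _ _ _ h
  have harg : q.1.2 + Pi.single (Fin.last d) (ε * q.1.1) - p.1.2
      = (q.1.2 - p.1.2) + Pi.single (Fin.last d) (ε * q.1.1) := by ring
  rw [harg, norm1_single_last _ _ (by simp [hz, hy] : (q.1.2 - p.1.2) (Fin.last d) = 0)] at hn hpar
  have habs : |ε * (q.1.1 : ℤ)| = q.1.1 := by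
    rcases hε with h1 | h1 <;> simp [h1, abs_of_nonneg]
  rw [habs] at hn hpar
  rw [mem_Sset_iff]
  refine ⟨hu, hz, by omega, ?_⟩
  rw [Int.even_iff] at hpar ⊢
  omega

lemma Wgen_diag_pos (hP : IsRandomWalk d P) (hε : ε = 1 ∨ ε = -1)
    (p : {p // p ∈ Sset d t x}) : 0 < Wgen d P ε t x p p := by
  rcases hε with h1 | h1
  · have := P_pos_add hP p.1.1 p.1.2
    simpa [Wgen, h1] using this
  · have := P_pos_sub hP p.1.1 p.1.2
    simpa [Wgen, h1] using this

lemma Wgen_det_ne_zero (hP : IsRandomWalk d P) (hε : ε = 1 ∨ ε = -1) :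
    (Wgen d P ε t x).det ≠ 0 := by
  rw [← Matrix.det_transpose]
  have hBT : (Wgen d P ε t x).transpose.BlockTriangular (fun p => p.1.1) := by
    intro i j hlt
    show Wgen d P ε t x j i = 0
    by_contra hne
    obtain ⟨-, -, hn, -⟩ := mem_Sset_iff.mp (Wgen_support hP hε j i hne)
    have := norm1_nonneg (i.1.2 - j.1.2)
    simp only at hlt
    omega
  rw [hBT.det]
  apply Finset.prod_ne_zero_iff.mpr
  intro a _
  have hblock : ((Wgen d P ε t x).transpose.toSquareBlock (fun p => p.1.1) a) =
      Matrix.diagonal (fun i => Wgen d P ε t x i.1 i.1) := by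
    ext i j
    by_cases hij : i = j
    · subst hij
      simp [Matrix.toSquareBlock_def, Matrix.diagonal, Matrix.transpose]
    · rw [Matrix.diagonal_apply_ne _ hij]
      show Wgen d P ε t x j.1 i.1 = 0
      by_contra hne
      obtain ⟨-, -, hn, -⟩ := mem_Sset_iff.mp (Wgen_support hP hε j.1 i.1 hne)
      have h0 := norm1_nonneg (i.1.1.2 - j.1.1.2)
      have hts : (i.1 : ℕ × (Fin (d+1) → ℤ)).1 = (j.1 : ℕ × (Fin (d+1) → ℤ)).1 := by
        rw [i.2, j.2]
      have hnz : norm1 (i.1.1.2 - j.1.1.2) = 0 := by omega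
      have : i.1.1.2 = j.1.1.2 := by
        have := norm1_eq_zero hnz
        funext k
        have := congrFun this k
        simp at this
        linarith [this]
      apply hij
      apply Subtype.ext; apply Subtype.ext
      exact Prod.ext hts this
  rw [hblock, Matrix.det_diagonal]
  exact Finset.prod_ne_zero_iff.mpr fun i _ => (Wgen_diag_pos hP hε i.1).ne'

lemma Wgen_mulVec_inv (hP : IsRandomWalk d P) (hε : ε = 1 ∨ ε = -1)
    (v : {p // p ∈ Sset d t x} → ℝ) :
    (Wgen d P ε t x).mulVec ((Wgen d P ε t x)⁻¹.mulVec v) = v := by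
  rw [Matrix.mulVec_mulVec, Matrix.mul_nonsing_inv _
    (isUnit_iff_ne_zero.mpr (Wgen_det_ne_zero hP hε)), Matrix.one_mulVec]

lemma Wgen_inv_mulVec (hP : IsRandomWalk d P) (hε : ε = 1 ∨ ε = -1)
    (v : {p // p ∈ Sset d t x} → ℝ) :
    (Wgen d P ε t x)⁻¹.mulVec ((Wgen d P ε t x).mulVec v) = v := by
  rw [Matrix.mulVec_mulVec, Matrix.nonsing_inv_mul _
    (isUnit_iff_ne_zero.mpr (Wgen_det_ne_zero hP hε)), Matrix.one_mulVec]

lemma key_lemma (hP : IsRandomWalk d P) (hε : ε = 1 ∨ ε = -1)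
    (hmem : (t', x') ∈ Sset d t x)
    (v : {p // p ∈ Sset d t x} → ℝ) (w : {p // p ∈ Sset d t' x'} → ℝ)
    (hv : ∀ p : {p // p ∈ Sset d t x}, p.1 ∉ Sset d t' x' → v p = 0)
    (hvw : ∀ (q : ℕ × (Fin (d + 1) → ℤ)) (hq : q ∈ Sset d t' x') (hq' : q ∈ Sset d t x),
      w ⟨q, hq⟩ = v ⟨q, hq'⟩) :
    ∀ (q : ℕ × (Fin (d + 1) → ℤ)) (hq : q ∈ Sset d t' x') (hq' : q ∈ Sset d t x),
      (Wgen d P ε t x)⁻¹.mulVec v ⟨q, hq'⟩ = (Wgen d P ε t' x')⁻¹.mulVec w ⟨q, hq⟩ := by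
  have hsub : Sset d t' x' ⊆ Sset d t x := Sset_subset hmem
  set W := Wgen d P ε t x with hW
  set W' := Wgen d P ε t' x' with hW'
  set u : {p // p ∈ Sset d t x} → ℝ := W⁻¹.mulVec v with hu
  have hWu : W.mulVec u = v := Wgen_mulVec_inv hP hε v
  set ι : {p // p ∈ Sset d t' x'} → {p // p ∈ Sset d t x} := fun q => ⟨q.1, hsub q.2⟩ with hι
  set w' : {p // p ∈ Sset d t' x'} → ℝ := fun q => u (ι q) with hw'
  have hW'w' : W'.mulVec w' = w := by
    funext q
    have hq2 : v (ι q) = (W.mulVec u) (ι q) := by rw [hWu]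
    have hq3 : w q = v (ι q) := by
      have := hvw q.1 q.2 (hsub q.2)
      simpa using this
    rw [Matrix.mulVec, hq3, hq2, Matrix.mulVec]
    show ∑ p, W' q p * w' p = ∑ p, W (ι q) p * u p
    rw [← Finset.sum_filter_add_sum_filter_not Finset.univ (fun p => p.1 ∈ Sset d t' x')
      (fun p => W (ι q) p * u p)]
    have hzero : ∑ p ∈ Finset.univ.filter (fun p => p.1 ∉ Sset d t' x'),
        W (ι q) p * u p = 0 := by
      apply Finset.sum_eq_zero
      intro p hp
      rw [Finset.mem_filter] at hp
      have : W (ι q) p = 0 := by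
        by_contra hne
        have hmem2 : p.1 ∈ Sset d (ι q).1.1 (ι q).1.2 := Wgen_support hP hε (ι q) p hne
        have : p.1 ∈ Sset d t' x' := by
          apply Sset_subset (x := x') (t := t') ?_ hmem2
          have := hsub q.2
          exact q.2
        exact hp.2 this
      rw [this, zero_mul]
    rw [hzero, add_zero]
    apply Finset.sum_bij (i := fun (p : {p // p ∈ Sset d t' x'}) (_ : p ∈ Finset.univ) => ι p)
    · intro a _
      rw [Finset.mem_filter]
      exact ⟨Finset.mem_univ _, a.2⟩
    · intro a _ b _ hab
      rw [Subtype.ext_iff] at hab ⊢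
      exact hab
    · intro b hb
      rw [Finset.mem_filter] at hb
      exact ⟨⟨b.1, hb.2⟩, Finset.mem_univ _, Subtype.ext rfl⟩
    · intro a _
      rfl
  have hfinal : W'⁻¹.mulVec w = w' := by
    rw [← hW'w', Wgen_inv_mulVec hP hε]
  intro q hq hq'
  rw [hfinal]

/-- if `(t̃,x̃) ∈ S(t,x)`, the inverses `(W^±_{t,x})⁻¹` and `(W^±_{t̃,x̃})⁻¹`
agree on vectors supported on `S(t̃,x̃)`. -/
theorem stmt_8 (d : ℕ) (P : ℕ → (Fin (d + 1) → ℤ) → (Fin (d + 1) → ℤ) → ℝ)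
    (hP : IsRandomWalk d P) (t t' : ℕ) (ht : 1 ≤ t) (ht' : 1 ≤ t')
    (x x' : Fin (d + 1) → ℤ) (hx : x (Fin.last d) = 0) (hx' : x' (Fin.last d) = 0)
    (hmem : (t', x') ∈ Sset d t x)
    (v : {p // p ∈ Sset d t x} → ℝ) (w : {p // p ∈ Sset d t' x'} → ℝ)
    (hv : ∀ p : {p // p ∈ Sset d t x}, p.1 ∉ Sset d t' x' → v p = 0)
    (hvw : ∀ (q : ℕ × (Fin (d + 1) → ℤ)) (hq : q ∈ Sset d t' x') (hq' : q ∈ Sset d t x),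
      w ⟨q, hq⟩ = v ⟨q, hq'⟩) :
    (∀ (q : ℕ × (Fin (d + 1) → ℤ)) (hq : q ∈ Sset d t' x') (hq' : q ∈ Sset d t x),
      (Wplus P t x)⁻¹.mulVec v ⟨q, hq'⟩ = (Wplus P t' x')⁻¹.mulVec w ⟨q, hq⟩) ∧
    (∀ (q : ℕ × (Fin (d + 1) → ℤ)) (hq : q ∈ Sset d t' x') (hq' : q ∈ Sset d t x),
      (Wminus P t x)⁻¹.mulVec v ⟨q, hq'⟩ = (Wminus P t' x')⁻¹.mulVec w ⟨q, hq⟩) := by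
  have hplus : ∀ (s : ℕ) (y : Fin (d + 1) → ℤ), Wplus P s y = Wgen d P 1 s y := by
    intro s y
    funext p q
    simp [Wplus, Wgen, one_mul]
  have hminus : ∀ (s : ℕ) (y : Fin (d + 1) → ℤ), Wminus P s y = Wgen d P (-1) s y := by
    intro s y
    funext p q
    rw [Wminus, Wgen, neg_one_mul, Pi.single_neg, sub_eq_add_neg]
  constructor
  · intro q hq hq'
    rw [hplus t x, hplus t' x']
    exact key_lemma hP (Or.inl rfl) hmem v w hv hvw q hq hq'
  · intro q hq hq'
    rw [hminus t x, hminus t' x']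
    exact key_lemma hP (Or.inr rfl) hmem v w hv hvw q hq hq'
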